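/- Let G be a locally finite graph with exactly one end, which has finite vertex-degree. If G contains an infinite family of pairwise edge-disjoint 2-rays, then G contains an infinite family of pairwise edge-disjoint double rays. -/

import Mathlib

open SimpleGraph

variable {V : Type*}

/-- A ray in `G`: an injective sequence of vertices with consecutive vertices adjacent. -/
def IsRay (G : SimpleGraph V) (f : ℕ → V) : Prop :=
  Function.Injective f ∧ ∀ n, G.Adj (f n) (f (n + 1))

/-- A double ray in `G`: an injective two-way infinite sequence with consecutive
vertices adjacent. -/
def IsDoubleRay (G : SimpleGraph V) (f : ℤ → V) : Prop :=
  Function.Injective f ∧ ∀ n, G.Adj (f n) (f (n + 1))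

/-- The edges used by a ray. -/
def rayEdges (f : ℕ → V) : Set (Sym2 V) := {e | ∃ n, e = s(f n, f (n + 1))}

/-- The edges used by a double ray. -/
def drEdges (f : ℤ → V) : Set (Sym2 V) := {e | ∃ n : ℤ, e = s(f n, f (n + 1))}

/-- Two rays are equivalent (belong to the same end) iff no finite vertex set
separates them: for every finite `S` there are tails of both rays avoiding `S`
which are joined by a walk avoiding `S`. -/
def RayEquiv (G : SimpleGraph V) (f g : ℕ → V) : Prop :=
  ∀ S : Finset V, ∃ a b, (∀ i, a ≤ i → f i ∉ S) ∧ (∀ j, b ≤ j → g j ∉ S) ∧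
    ∃ w : G.Walk (f a) (g b), ∀ v ∈ w.support, v ∉ S

/-- The forward ray of a double ray. -/
def drFwd (f : ℤ → V) : ℕ → V := fun n => f n

/-- The backward ray of a double ray. -/
def drBwd (f : ℤ → V) : ℕ → V := fun n => f (-(n : ℤ) - 1)

/-- The end (represented by the ray `R`) has vertex-degree exactly `k`:
there are `k` pairwise vertex-disjoint rays equivalent to `R`, but not `k + 1`. -/
def EndVertexDegree (G : SimpleGraph V) (R : ℕ → V) (k : ℕ) : Prop :=
  (∃ F : Fin k → ℕ → V, (∀ i, IsRay G (F i) ∧ RayEquiv G R (F i)) ∧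
      Pairwise fun i j => Disjoint (Set.range (F i)) (Set.range (F j))) ∧
  ¬ ∃ F : Fin (k + 1) → ℕ → V, (∀ i, IsRay G (F i) ∧ RayEquiv G R (F i)) ∧
      Pairwise fun i j => Disjoint (Set.range (F i)) (Set.range (F j))

/-- A `2`-ray: an ordered pair of vertex-disjoint rays. -/
def Is2Ray (G : SimpleGraph V) (p : (ℕ → V) × (ℕ → V)) : Prop :=
  IsRay G p.1 ∧ IsRay G p.2 ∧ Disjoint (Set.range p.1) (Set.range p.2)

/-- The edges used by a `2`-ray. -/
def twoRayEdges (p : (ℕ → V) × (ℕ → V)) : Set (Sym2 V) := rayEdges p.1 ∪ rayEdges p.2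

/-!
Write the `2`-rays as `(R i, S i)`. By Ramsey's theorem we may pass to a subsequence on which,
for `i < j`, whether `R i` meets `S j`, whether `S i` meets `R j`, and whether `R i ∩ R j` and
`S i ∩ S j` are infinite do not depend on `i` and `j`. The end being thin, the last two always
hold: rays meeting pairwise finitely often have disjoint tails.

If `R i` meets `S j` for `i < j`, then `S (2t+1)` links the disjoint rays `R (2t)` and `S (2t)`,
and the three contain a double ray; the pairs `{2t, 2t+1}` make these edge-disjoint. The case
that `S i` meets `R j` is symmetric. Otherwise `X = ⋃ R i` and `Y = ⋃ S j` are disjoint, and as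
`G` has only one end there are infinitely many disjoint `X`–`Y` paths. Since the `R i` are
edge-disjoint and meet pairwise infinitely often, infinitely many of these paths start at origins
of edge-disjoint rays in `X`; likewise in `Y`, and the two sides glue to double rays.
-/

open Set Function

section Combinatorics

lemma Set.Infinite.exists_infinite_inter_fiber {α C : Type*} [Finite C] {S : Set α}
    (hS : S.Infinite) (c : α → C) : ∃ d, (S ∩ c ⁻¹' {d}).Infinite := by
  by_contra! h
  exact hS ((finite_iUnion h).subset fun x hx => mem_iUnion.2 ⟨c x, hx, rfl⟩)

theorem exists_strictMono_monochromatic {C : Type*} [Finite C] (c : ℕ → ℕ → C) :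
    ∃ g : ℕ → ℕ, StrictMono g ∧ ∃ d, ∀ i j, i < j → c (g i) (g j) = d := by
  have step (T : {T : Set ℕ // T.Infinite}) : ∃ T' : {T : Set ℕ // T.Infinite}, ∃ d,
      T'.1 ⊆ T.1 ∧ ∀ y ∈ T'.1, sInf T.1 < y ∧ c (sInf T.1) y = d := by
    obtain ⟨d, hd⟩ := (T.2.sdiff (finite_Iic (sInf T.1))).exists_infinite_inter_fiber (c (sInf T.1))
    exact ⟨⟨_, hd⟩, d, fun y hy => hy.1.1, fun y hy => ⟨not_le.1 hy.1.2, hy.2⟩⟩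
  choose next colour hsub hnext using step
  let T : ℕ → {T : Set ℕ // T.Infinite} := fun n => next^[n] ⟨univ, infinite_univ⟩
  have hT (n : ℕ) : T (n + 1) = next (T n) := iterate_succ_apply' ..
  have hanti : Antitone fun n => (T n).1 := antitone_nat_of_succ_le fun n => by
    simpa only [hT] using hsub (T n)
  -- the pivots `sInf (T n)`: the colour of a pair of pivots depends only on the smaller one
  have hpivot (m n : ℕ) (hmn : m < n) :
      sInf (T m).1 < sInf (T n).1 ∧ c (sInf (T m).1) (sInf (T n).1) = colour (T m) := by
    refine hnext (T m) _ ?_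
    rw [← hT]
    exact hanti hmn (Nat.sInf_mem (T n).2.nonempty)
  obtain ⟨d, hd⟩ := Finite.exists_infinite_fiber fun m => colour (T m)
  obtain ⟨φ, hφ, hφd⟩ := Nat.exists_strictMono_subsequence fun N =>
    let ⟨n, hn, hNn⟩ := (infinite_coe_iff.1 hd).exists_gt N
    ⟨n, hNn, hn⟩
  exact ⟨fun n => sInf (T (φ n)).1, fun m n h => (hpivot _ _ (hφ h)).1, d,
    fun i j hij => (hpivot _ _ (hφ hij)).2.trans (hφd i)⟩

lemma exists_seq_mem_lt_succ {P : Set ℕ} (hP : P.Infinite) (g : ℕ → ℕ → ℕ) :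
    ∃ a : ℕ → ℕ, (∀ j, a j ∈ P) ∧ ∀ j, g j (a j) < a (j + 1) := by
  choose next hnext hlt using hP.exists_gt
  exact ⟨fun j => Nat.rec (next 0) (fun j a => next (g j a)) j,
    fun j => by cases j <;> exact hnext _, fun j => hlt _⟩

lemma exists_seq_pairwise_disjoint {α β : Type*} (P : α → Prop) (S : α → Set β)
    (h : ∀ Z : Set β, Z.Finite → ∃ x, P x ∧ (S x).Finite ∧ Disjoint (S x) Z) :
    ∃ x : ℕ → α, (∀ n, P (x n)) ∧ Pairwise (Disjoint on fun n => S (x n)) := by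
  choose next hP hfin hdisj using fun Z : {Z : Set β // Z.Finite} => h Z.1 Z.2
  let Z : ℕ → {Z : Set β // Z.Finite} :=
    fun n => Nat.rec ⟨∅, finite_empty⟩ (fun _ Z => ⟨Z.1 ∪ S (next Z), Z.2.union (hfin Z)⟩) n
  have hmono : Monotone fun n => (Z n).1 := monotone_nat_of_le_succ fun n => subset_union_left
  refine ⟨fun n => next (Z n), fun n => hP _, (pairwise_disjoint_on _).2 fun m n hmn => ?_⟩
  have hm : S (next (Z m)) ⊆ (Z n).1 := (subset_union_right (s := (Z m).1)).trans (hmono hmn)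
  exact (hdisj (Z n)).symm.mono_left hm

lemma Pairwise.disjoint_union₃ {ι α : Type*} {a b c : ι → Set α} (ha : Pairwise (Disjoint on a))
    (hb : Pairwise (Disjoint on b)) (hc : Pairwise (Disjoint on c))
    (hab : ∀ i j, Disjoint (a i) (b j)) (hac : ∀ i j, Disjoint (a i) (c j))
    (hbc : ∀ i j, Disjoint (b i) (c j)) : Pairwise (Disjoint on fun i => a i ∪ b i ∪ c i) := by
  intro i j hij
  simp only [onFun, disjoint_union_left, disjoint_union_right]
  exact ⟨⟨⟨⟨ha hij, (hab j i).symm⟩, (hac j i).symm⟩, ⟨hab i j, hb hij⟩, (hbc j i).symm⟩,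
    ⟨hac i j, hbc i j⟩, hc hij⟩

lemma Pairwise.injective_of_mem {ι α : Type*} {S : ι → Set α} (h : Pairwise (Disjoint on S))
    {x : ι → α} (hx : ∀ i, x i ∈ S i) : Injective x := by
  intro i j hij
  by_contra hne
  exact disjoint_left.1 (h hne) (hx i) (hij ▸ hx j)

lemma Disjoint.sym2 {α : Type*} {s t : Set α} (h : Disjoint s t) : Disjoint s.sym2 t.sym2 := by
  refine disjoint_left.2 fun e hs ht => ?_
  induction e using Sym2.ind with
  | h x y => exact disjoint_left.1 h (mk_mem_sym2_iff.1 hs).1 (mk_mem_sym2_iff.1 ht).1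

end Combinatorics

section Rays

variable {G : SimpleGraph V}

lemma IsRay.tail {f : ℕ → V} (hf : IsRay G f) (a : ℕ) : IsRay G fun n => f (a + n) :=
  ⟨fun x y h => by simpa using hf.1 h, fun n => by simpa [add_assoc] using hf.2 (a + n)⟩

lemma rayEdges_tail_subset (f : ℕ → V) (a : ℕ) : rayEdges (fun n => f (a + n)) ⊆ rayEdges f := by
  rintro e ⟨n, rfl⟩
  exact ⟨a + n, by simp [add_assoc]⟩

lemma rayEdges_subset_sym2 {f : ℕ → V} {X : Set V} (hf : range f ⊆ X) : rayEdges f ⊆ X.sym2 := by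
  rintro e ⟨n, rfl⟩
  exact ⟨hf (mem_range_self _), hf (mem_range_self _)⟩

def segEdges (p : ℕ → V) (a b : ℕ) : Set (Sym2 V) :=
  {e | ∃ l, a ≤ l ∧ l < b ∧ e = s(p l, p (l + 1))}

lemma segEdges_subset_rayEdges (p : ℕ → V) (a b : ℕ) : segEdges p a b ⊆ rayEdges p := by
  rintro e ⟨l, -, -, rfl⟩
  exact ⟨l, rfl⟩

lemma segEdges_shift_subset (p : ℕ → V) (m a b : ℕ) :
    segEdges (fun n => p (m + n)) a b ⊆ segEdges p (m + a) (m + b) := by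
  rintro e ⟨l, hal, hlb, rfl⟩
  exact ⟨m + l, by omega, by omega, by simp [add_assoc]⟩

lemma segEdges_subset_sym2 (p : ℕ → V) (L : ℕ) : segEdges p 0 L ⊆ (p '' Iic L).sym2 := by
  rintro e ⟨l, -, hl, rfl⟩
  exact ⟨mem_image_of_mem _ (mem_Iic.2 hl.le), mem_image_of_mem _ (mem_Iic.2 hl)⟩

lemma disjoint_segEdges {f : ℕ → V} (hf : Injective f) {a b c d : ℕ} (hbc : b ≤ c) :
    Disjoint (segEdges f a b) (segEdges f c d) := by
  refine disjoint_left.2 ?_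
  rintro e ⟨l, -, hl, rfl⟩ ⟨l', hl', -, he⟩
  rcases Sym2.eq_iff.1 he with ⟨h, -⟩ | ⟨h, -⟩ <;> have := hf h <;> omega

def IsFinPath (G : SimpleGraph V) (p : ℕ → V) (L : ℕ) : Prop :=
  InjOn p (Iic L) ∧ ∀ i < L, G.Adj (p i) (p (i + 1))

lemma IsRay.isFinPath {f : ℕ → V} (hf : IsRay G f) (L : ℕ) : IsFinPath G f L :=
  ⟨hf.1.injOn, fun i _ => hf.2 i⟩

lemma IsFinPath.shift {p : ℕ → V} {L : ℕ} (hp : IsFinPath G p L) {m L' : ℕ} (h : m + L' ≤ L) :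
    IsFinPath G (fun i => p (m + i)) L' :=
  ⟨fun i hi j hj hij => by
      have := hp.1 (mem_Iic.2 (by simp at hi; omega)) (mem_Iic.2 (by simp at hj; omega)) hij
      omega,
    fun i hi => by simpa [add_assoc] using hp.2 (m + i) (by omega)⟩

lemma SimpleGraph.Walk.IsPath.isFinPath {u v : V} {w : G.Walk u v} (hw : w.IsPath) :
    IsFinPath G w.getVert w.length :=
  ⟨hw.getVert_injOn, fun _ hi => w.adj_getVert_succ hi⟩

/-- An `X`–`Y` path in the sense of Diestel. -/
structure IsXYPath (G : SimpleGraph V) (X Y : Set V) (p : ℕ → V) (L : ℕ) : Prop where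
  isFinPath : IsFinPath G p L
  start_mem : p 0 ∈ X
  end_mem : p L ∈ Y
  notMem_left : ∀ i, 0 < i → i ≤ L → p i ∉ X
  notMem_right : ∀ i < L, p i ∉ Y

/-- Start at the last visit of `X` and stop at the first visit of `Y` after it. -/
lemma IsFinPath.exists_isXYPath {p : ℕ → V} {L : ℕ} (hp : IsFinPath G p L) {X Y : Set V}
    (hXY : Disjoint X Y) (h0 : p 0 ∈ X) (hL : p L ∈ Y) :
    ∃ m L', m + L' ≤ L ∧ IsXYPath G X Y (fun i => p (m + i)) L' := by
  classical
  set m := Nat.findGreatest (p · ∈ X) L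
  have hmX : p m ∈ X := Nat.findGreatest_spec (P := (p · ∈ X)) (Nat.zero_le L) h0
  have hmL : m < L := (Nat.findGreatest_le L).lt_of_ne fun h => disjoint_left.1 hXY (h ▸ hmX) hL
  have hex : ∃ i, m < i ∧ p i ∈ Y := ⟨L, hmL, hL⟩
  obtain ⟨hmm', hm'Y⟩ := Nat.find_spec hex
  have hm'L : Nat.find hex ≤ L := Nat.find_min' hex ⟨hmL, hL⟩
  refine ⟨m, Nat.find hex - m, by omega, hp.shift (by omega), by simpa using hmX,
    by simpa [show m + (Nat.find hex - m) = Nat.find hex by omega] using hm'Y,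
    fun i hi hiL => Nat.findGreatest_is_greatest (show m < m + i by omega) (by omega),
    fun i hi hiY => ?_⟩
  rcases i.eq_zero_or_pos with rfl | hi0
  · exact disjoint_left.1 hXY hmX hiY
  · exact Nat.find_min hex (by omega) ⟨by omega, hiY⟩

lemma IsXYPath.disjoint_sym2_left {X Y : Set V} {p : ℕ → V} {L : ℕ} (hp : IsXYPath G X Y p L) :
    Disjoint (segEdges p 0 L) X.sym2 := by
  refine disjoint_left.2 ?_
  rintro e ⟨l, -, hl, rfl⟩ he
  exact hp.notMem_left (l + 1) (by omega) hl (mk_mem_sym2_iff.1 he).2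

lemma IsXYPath.disjoint_sym2_right {X Y : Set V} {p : ℕ → V} {L : ℕ} (hp : IsXYPath G X Y p L) :
    Disjoint (segEdges p 0 L) Y.sym2 := by
  refine disjoint_left.2 ?_
  rintro e ⟨l, -, hl, rfl⟩ he
  exact hp.notMem_right l hl (mk_mem_sym2_iff.1 he).1

/-- `B 0` is skipped: it is meant to coincide with `p L`. -/
def pathAppend (p : ℕ → V) (L : ℕ) (B : ℕ → V) : ℕ → V := fun n => if n ≤ L then p n else B (n - L)

section pathAppend

variable {p B : ℕ → V} {L : ℕ}

@[simp]
lemma pathAppend_zero : pathAppend p L B 0 = p 0 := if_pos (Nat.zero_le L)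

lemma isRay_pathAppend (hp : IsFinPath G p L) (hB : IsRay G B) (hpB : p L = B 0)
    (hdisj : ∀ i < L, p i ∉ range B) : IsRay G (pathAppend p L B) := by
  refine ⟨fun x y hxy => ?_, fun n => ?_⟩
  · unfold pathAppend at hxy
    split_ifs at hxy with hx hy hy
    · exact hp.1 (mem_Iic.2 hx) (mem_Iic.2 hy) hxy
    · rcases hx.lt_or_eq with hx | rfl
      · exact absurd ⟨_, hxy.symm⟩ (hdisj x hx)
      · have := hB.1 (hpB ▸ hxy); omega
    · rcases hy.lt_or_eq with hy | rfl
      · exact absurd ⟨_, hxy⟩ (hdisj y hy)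
      · have := hB.1 (hpB ▸ hxy.symm); omega
    · have := hB.1 hxy; omega
  · unfold pathAppend
    rcases lt_trichotomy n L with h | rfl | h
    · rw [if_pos h.le, if_pos (by omega)]; exact hp.2 n h
    · rw [if_pos le_rfl, if_neg (by omega), hpB, Nat.add_sub_cancel_left]; exact hB.2 0
    · rw [if_neg (by omega), if_neg (by omega), show n + 1 - L = n - L + 1 by omega]
      exact hB.2 _

lemma rayEdges_pathAppend_subset (hpB : p L = B 0) :
    rayEdges (pathAppend p L B) ⊆ segEdges p 0 L ∪ rayEdges B := by
  rintro e ⟨n, rfl⟩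
  unfold pathAppend
  rcases lt_trichotomy n L with h | rfl | h
  · rw [if_pos h.le, if_pos (by omega)]; exact Or.inl ⟨n, n.zero_le, h, rfl⟩
  · rw [if_pos le_rfl, if_neg (by omega), hpB, Nat.add_sub_cancel_left]; exact Or.inr ⟨0, rfl⟩
  · rw [if_neg (by omega), if_neg (by omega), show n + 1 - L = n - L + 1 by omega]
    exact Or.inr ⟨_, rfl⟩

lemma range_pathAppend_subset : range (pathAppend p L B) ⊆ p '' Iic L ∪ range B := by
  rintro _ ⟨n, rfl⟩
  unfold pathAppend
  split_ifs with h
  · exact Or.inl (mem_image_of_mem _ h)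
  · exact Or.inr (mem_range_self _)

end pathAppend

/-- `A 0` is skipped: it is meant to coincide with `B 0`. -/
def joinRays (A B : ℕ → V) : ℤ → V := fun z => if 0 ≤ z then B z.toNat else A (-z).toNat

section joinRays

variable {A B : ℕ → V}

lemma isDoubleRay_joinRays (hA : IsRay G A) (hB : IsRay G B) (h0 : A 0 = B 0)
    (hAB : ∀ s t, A s = B t → s = 0) : IsDoubleRay G (joinRays A B) := by
  refine ⟨fun z w hzw => ?_, fun n => ?_⟩
  · unfold joinRays at hzw
    split_ifs at hzw with hz hw hw
    · have := hB.1 hzw; omega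
    · have := hAB _ _ hzw.symm; omega
    · have := hAB _ _ hzw; omega
    · have := hA.1 hzw; omega
  · unfold joinRays
    rcases lt_trichotomy n (-1) with h | rfl | h
    · rw [if_neg (by omega), if_neg (by omega), show (-n).toNat = (-(n + 1)).toNat + 1 by omega]
      exact (hA.2 _).symm
    · rw [if_neg (by omega), if_pos (by omega)]
      simpa [← h0] using (hA.2 0).symm
    · rw [if_pos (by omega), if_pos (by omega), show (n + 1).toNat = n.toNat + 1 by omega]
      exact hB.2 _

lemma drEdges_joinRays_subset (h0 : A 0 = B 0) :
    drEdges (joinRays A B) ⊆ rayEdges A ∪ rayEdges B := by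
  rintro e ⟨n, rfl⟩
  unfold joinRays
  rcases lt_trichotomy n (-1) with h | rfl | h
  · rw [if_neg (by omega), if_neg (by omega), show (-n).toNat = (-(n + 1)).toNat + 1 by omega]
    exact Or.inl ⟨_, Sym2.eq_swap⟩
  · rw [if_neg (by omega), if_pos (by omega)]
    exact Or.inl ⟨0, by simp [h0, Sym2.eq_swap]⟩
  · rw [if_pos (by omega), if_pos (by omega), show (n + 1).toNat = n.toNat + 1 by omega]
    exact Or.inr ⟨_, rfl⟩

end joinRays

lemma IsXYPath.exists_isDoubleRay {X Y : Set V} {p : ℕ → V} {L : ℕ} (hp : IsXYPath G X Y p L)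
    (hXY : Disjoint X Y) {A B : ℕ → V} (hA : IsRay G A) (hAX : range A ⊆ X) (hA0 : A 0 = p 0)
    (hB : IsRay G B) (hBY : range B ⊆ Y) (hB0 : B 0 = p L) :
    ∃ f, IsDoubleRay G f ∧ drEdges f ⊆ rayEdges A ∪ rayEdges B ∪ segEdges p 0 L := by
  have hC : IsRay G (pathAppend p L B) := isRay_pathAppend hp.isFinPath hB hB0.symm
    fun i hi hiB => hp.notMem_right i hi (hBY hiB)
  have hAC (s t : ℕ) (hst : A s = pathAppend p L B t) : s = 0 := by
    rcases range_pathAppend_subset ⟨t, hst.symm⟩ with ⟨i, hi, hpi⟩ | hBt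
    · rcases i.eq_zero_or_pos with rfl | hi0
      · exact hA.1 (hpi.symm.trans hA0.symm)
      · exact (hp.notMem_left i hi0 hi (hpi ▸ hAX (mem_range_self s))).elim
    · exact (Set.disjoint_left.1 hXY (hAX (mem_range_self s)) (hBY hBt)).elim
  refine ⟨joinRays A (pathAppend p L B), isDoubleRay_joinRays hA hC (by simp [hA0]) hAC, ?_⟩
  refine (drEdges_joinRays_subset (by simp [hA0])).trans ?_
  rw [union_assoc, union_comm (rayEdges B)]
  exact union_subset_union_right _ (rayEdges_pathAppend_subset hB0.symm)

end Rays

section OneEnd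

variable {G : SimpleGraph V}

lemma IsRay.exists_walk_of_le {f : ℕ → V} (hf : IsRay G f) {a b : ℕ} (hab : a ≤ b) :
    ∃ w : G.Walk (f a) (f b), ∀ x ∈ w.support, ∃ i ≥ a, x = f i := by
  induction b, hab using Nat.le_induction with
  | base => exact ⟨.nil, fun x hx => ⟨a, le_rfl, by simpa using hx⟩⟩
  | succ b hab ih =>
    obtain ⟨w, hw⟩ := ih
    refine ⟨w.concat (hf.2 b), fun x hx => ?_⟩
    simp only [Walk.support_concat, List.mem_append, List.mem_singleton] at hx
    rcases hx with hx | rfl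
    · exact hw x hx
    · exact ⟨b + 1, by omega, rfl⟩

lemma IsRay.exists_walk_avoiding {f : ℕ → V} (hf : IsRay G f) {Z : Set V} {a b : ℕ}
    (ha : ∀ i ≥ a, f i ∉ Z) (hb : ∀ i ≥ b, f i ∉ Z) :
    ∃ w : G.Walk (f a) (f b), ∀ x ∈ w.support, x ∉ Z := by
  rcases le_total a b with hab | hba
  · obtain ⟨w, hw⟩ := hf.exists_walk_of_le hab
    exact ⟨w, fun x hx => by obtain ⟨i, hi, rfl⟩ := hw x hx; exact ha i hi⟩
  · obtain ⟨w, hw⟩ := hf.exists_walk_of_le hba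
    refine ⟨w.reverse, fun x hx => ?_⟩
    rw [Walk.support_reverse, List.mem_reverse] at hx
    obtain ⟨i, hi, rfl⟩ := hw x hx
    exact hb i hi

/-- Both rays are joined to tails of `W` outside `Z`. -/
lemma exists_walk_avoiding_of_rayEquiv {W f g : ℕ → V} (hW : IsRay G W) (hf : RayEquiv G W f)
    (hg : RayEquiv G W g) (Z : Finset V) :
    ∃ a b, ∃ w : G.Walk (f a) (g b), ∀ x ∈ w.support, x ∉ Z := by
  obtain ⟨a₁, b₁, hW₁, -, w₁, hw₁⟩ := hf Z
  obtain ⟨a₂, b₂, hW₂, -, w₂, hw₂⟩ := hg Z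
  obtain ⟨w, hw⟩ := hW.exists_walk_avoiding (Z := Z) hW₁ hW₂
  refine ⟨b₁, b₂, (w₁.reverse.append w).append w₂, fun x hx => ?_⟩
  simp only [Walk.mem_support_append_iff, Walk.support_reverse, List.mem_reverse] at hx
  rcases hx with (hx | hx) | hx
  exacts [hw₁ x hx, hw x hx, hw₂ x hx]

/-- Each new `X`–`Y` path is cut out of a walk from `r` to `s` avoiding the finitely many
vertices used so far. -/
lemma exists_pairwise_disjoint_isXYPath {W : ℕ → V} (hW : IsRay G W)
    (hone : ∀ f : ℕ → V, IsRay G f → RayEquiv G W f) {r s : ℕ → V} (hr : IsRay G r)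
    (hs : IsRay G s) {X Y : Set V} (hXY : Disjoint X Y) (hrX : range r ⊆ X) (hsY : range s ⊆ Y) :
    ∃ (ℓ : ℕ → ℕ) (q : ℕ → ℕ → V), (∀ t, IsXYPath G X Y (q t) (ℓ t)) ∧
      Pairwise (Disjoint on fun t => q t '' Iic (ℓ t)) := by
  classical
  obtain ⟨x, hx, hxd⟩ := exists_seq_pairwise_disjoint
    (fun x : ℕ × (ℕ → V) => IsXYPath G X Y x.2 x.1) (fun x => x.2 '' Iic x.1) fun Z hZ => by
      obtain ⟨a, b, w, hw⟩ :=
        exists_walk_avoiding_of_rayEquiv hW (hone r hr) (hone s hs) hZ.toFinset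
      have hP := (Walk.bypass_isPath w).isFinPath
      obtain ⟨m, L, hmL, hmp⟩ := hP.exists_isXYPath hXY (by simpa using hrX (mem_range_self a))
        (by simpa using hsY (mem_range_self b))
      refine ⟨(L, fun i => w.bypass.getVert (m + i)), hmp, (finite_Iic L).image _,
        disjoint_left.2 ?_⟩
      rintro _ ⟨i, -, rfl⟩ hiZ
      exact hw _ (w.support_bypass_subset_support (w.bypass.getVert_mem_support _))
        (hZ.mem_toFinset.2 hiZ)
  exact ⟨fun t => (x t).1, fun t => (x t).2, hx, hxd⟩

lemma exists_pairwise_disjoint_tails {ι : Type*} [Finite ι] {T : ι → ℕ → V}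
    (hT : ∀ a, Injective (T a)) (hfin : Pairwise fun a b => (range (T a) ∩ range (T b)).Finite) :
    ∃ N, Pairwise fun a b =>
      Disjoint (range fun n => T a (N + n)) (range fun n => T b (N + n)) := by
  have hB : (⋃ a, ⋃ b, ⋃ (_ : a ≠ b), T a ⁻¹' range (T b)).Finite :=
    finite_iUnion fun a => finite_iUnion fun b => finite_iUnion fun hab =>
      ((hfin hab).preimage (hT a).injOn).subset fun n hn => ⟨mem_range_self n, hn⟩
  obtain ⟨N, hN⟩ := hB.bddAbove
  refine ⟨N + 1, fun a b hab => Set.disjoint_left.2 ?_⟩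
  rintro _ ⟨s, rfl⟩ ⟨t, ht⟩
  have : N + 1 + s ≤ N := hN (mem_iUnion₂.2 ⟨a, b, mem_iUnion.2 ⟨hab, N + 1 + t, ht⟩⟩)
  omega

/-- Otherwise tails of `T 0, …, T k` would be `k + 1` disjoint rays in the end of `W`. -/
lemma pairwise_infinite_inter_of_homogeneous {W : ℕ → V} {k : ℕ} (hdeg : EndVertexDegree G W k)
    (hone : ∀ f : ℕ → V, IsRay G f → RayEquiv G W f) {T : ℕ → ℕ → V} (hT : ∀ i, IsRay G (T i))
    {d : Prop} (hd : ∀ i j, i < j → (range (T i) ∩ range (T j)).Infinite = d) :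
    Pairwise fun i j => (range (T i) ∩ range (T j)).Infinite := by
  have key {i j : ℕ} (hij : i ≠ j) : (range (T i) ∩ range (T j)).Infinite ↔ d := by
    rcases hij.lt_or_gt with h | h
    · exact (hd i j h).to_iff
    · rw [inter_comm]; exact (hd j i h).to_iff
  have hd' : d := by
    by_contra hnd
    obtain ⟨N, hN⟩ := exists_pairwise_disjoint_tails (T := fun a : Fin (k + 1) => T a)
      (fun a => (hT a).1) fun a b hab =>
        not_infinite.1 fun h => hnd ((key (Fin.val_ne_of_ne hab)).1 h)
    exact hdeg.2 ⟨fun a n => T a (N + n), fun a => ⟨(hT a).tail N, hone _ ((hT a).tail N)⟩, hN⟩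
  exact fun i j hij => (key hij).2 hd'

end OneEnd

section EdgeDisjointRays

variable {G : SimpleGraph V}

/-- From infinitely many positions on `U`, run along `U` until it first meets `F j`, then along
`F j`; spacing the starting positions out keeps the segments taken from `U` disjoint. -/
lemma exists_edgeDisjoint_rays_along {U : ℕ → V} (hU : IsRay G U) {F : ℕ → ℕ → V}
    (hF : ∀ j, IsRay G (F j)) (hUF : ∀ j, (range U ∩ range (F j)).Infinite)
    (hUE : ∀ j, Disjoint (rayEdges U) (rayEdges (F j)))
    (hFE : Pairwise (Disjoint on fun j => rayEdges (F j))) {P : Set ℕ} (hP : P.Infinite) :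
    ∃ a : ℕ → ℕ, Injective a ∧ (∀ j, a j ∈ P) ∧ ∃ A : ℕ → ℕ → V,
      (∀ j, IsRay G (A j) ∧ A j 0 = U (a j) ∧ range (A j) ⊆ range U ∪ range (F j)) ∧
      Pairwise (Disjoint on fun j => rayEdges (A j)) := by
  classical
  have hhit (j b : ℕ) : ∃ l, b ≤ l ∧ U l ∈ range (F j) := by
    obtain ⟨l, hl, hbl⟩ :=
      (Infinite.preimage' (f := U) (by rw [inter_comm]; exact hUF j)).exists_gt b
    exact ⟨l, hbl.le, hl⟩
  let hit j b := Nat.find (hhit j b)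
  obtain ⟨a, haP, ha⟩ := exists_seq_mem_lt_succ hP hit
  have hle (j : ℕ) : a j ≤ hit j (a j) := (Nat.find_spec (hhit j (a j))).1
  have hmono : StrictMono a := strictMono_nat_of_lt_succ fun j => (hle j).trans_lt (ha j)
  have hhit_mem (j : ℕ) : U (hit j (a j)) ∈ range (F j) := (Nat.find_spec (hhit j (a j))).2
  choose q hq using hhit_mem
  let A j := pathAppend (fun n => U (a j + n)) (hit j (a j) - a j) (fun n => F j (q j + n))
  have hAE (j : ℕ) : rayEdges (A j) ⊆ segEdges U (a j) (hit j (a j)) ∪ rayEdges (F j) := by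
    refine (rayEdges_pathAppend_subset (by simp [hle j, hq])).trans (union_subset_union ?_
      (rayEdges_tail_subset _ _))
    simpa [hle j] using segEdges_shift_subset U (a j) 0 (hit j (a j) - a j)
  refine ⟨a, hmono.injective, haP, A, fun j => ⟨?_, by simp [A], ?_⟩, ?_⟩
  · refine isRay_pathAppend ((hU.tail _).isFinPath _) ((hF j).tail _) (by simp [hle j, hq]) ?_
    rintro i hi ⟨n, hn⟩
    exact Nat.find_min (hhit j (a j)) (show a j + i < hit j (a j) by omega) ⟨by omega, _, hn⟩
  · exact range_pathAppend_subset.trans (union_subset_union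
      ((image_subset_range _ _).trans (range_comp_subset_range _ U))
      (range_comp_subset_range _ (F j)))
  · refine (pairwise_disjoint_on _).2 fun s t hst => Disjoint.mono (hAE s) (hAE t) ?_
    simp only [disjoint_union_left, disjoint_union_right]
    exact ⟨⟨disjoint_segEdges hU.1 ((ha s).le.trans (hmono.monotone hst)),
        ((hUE s).mono_left (segEdges_subset_rayEdges _ _ _)).symm⟩,
      (hUE t).mono_left (segEdges_subset_rayEdges _ _ _), hFE hst.ne⟩

lemma exists_edgeDisjoint_rays_of_finite_inter {R : ℕ → ℕ → V} (hR : ∀ i, IsRay G (R i))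
    (hRE : Pairwise (Disjoint on fun i => rayEdges (R i))) {m : ℕ → V} (hm : Injective m)
    (hmR : ∀ t, m t ∈ ⋃ i, range (R i)) (hfin : ∀ i, (range (R i) ∩ range m).Finite) :
    ∃ φ : ℕ → ℕ, Injective φ ∧ ∃ A : ℕ → ℕ → V,
      (∀ t, IsRay G (A t) ∧ A t 0 = m (φ t) ∧ range (A t) ⊆ ⋃ i, range (R i)) ∧
      Pairwise (Disjoint on fun t => rayEdges (A t)) := by
  choose c pos hpos using fun t => mem_iUnion.1 (hmR t)
  -- each ray carries only finitely many `m t`, so infinitely many rays are used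
  have hc : (range c).Infinite := fun h => infinite_univ (α := ℕ) <| by
    simpa using h.preimage' fun i _ => ((hfin i).preimage hm.injOn).subset
      fun t (ht : c t = i) => ⟨⟨pos t, ht ▸ hpos t⟩, mem_range_self t⟩
  let e := Set.Infinite.natEmbedding _ hc
  choose φ hφ using fun n => (e n).2
  have hcφ : Injective (c ∘ φ) := fun s t h => e.injective (Subtype.ext (by simpa [hφ] using h))
  refine ⟨φ, hcφ.of_comp, fun t n => R (c (φ t)) (pos (φ t) + n),
    fun t => ⟨(hR _).tail _, by simp [hpos], (range_comp_subset_range _ _).trans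
      (subset_iUnion (fun i => range (R i)) _)⟩, fun s t hst => ?_⟩
  exact (hRE (hcφ.ne hst)).mono (rayEdges_tail_subset _ _) (rayEdges_tail_subset _ _)

lemma exists_edgeDisjoint_rays_from {R : ℕ → ℕ → V} (hR : ∀ i, IsRay G (R i))
    (hRR : Pairwise fun i j => (range (R i) ∩ range (R j)).Infinite)
    (hRE : Pairwise (Disjoint on fun i => rayEdges (R i))) {m : ℕ → V} (hm : Injective m)
    (hmR : ∀ t, m t ∈ ⋃ i, range (R i)) :
    ∃ φ : ℕ → ℕ, Injective φ ∧ ∃ A : ℕ → ℕ → V,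
      (∀ t, IsRay G (A t) ∧ A t 0 = m (φ t) ∧ range (A t) ⊆ ⋃ i, range (R i)) ∧
      Pairwise (Disjoint on fun t => rayEdges (A t)) := by
  by_cases hfin : ∀ i, (range (R i) ∩ range m).Finite
  · exact exists_edgeDisjoint_rays_of_finite_inter hR hRE hm hmR hfin
  obtain ⟨i, hi⟩ := not_forall.1 hfin
  obtain ⟨a, ha, haP, A, hA, hAE⟩ := exists_edgeDisjoint_rays_along (hR i)
    (F := fun j => R (i + 1 + j)) (fun j => hR _) (fun j => hRR (by omega))
    (fun j => hRE (by omega)) (fun s t hst => hRE (by omega))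
    (Infinite.preimage' (f := R i) (by rw [inter_comm]; exact hi))
  choose φ hφ using haP
  refine ⟨φ, fun s t h => ha ((hR i).1 (by rw [← hφ, ← hφ, h])), A, fun j => ⟨(hA j).1,
    (hA j).2.1.trans (hφ j).symm, (hA j).2.2.trans (union_subset
      (subset_iUnion (fun i => range (R i)) _) (subset_iUnion (fun i => range (R i)) _))⟩, hAE⟩

end EdgeDisjointRays

section DoubleRays

variable {G : SimpleGraph V}

lemma exists_isDoubleRay_of_meets {R₁ S₁ S₂ : ℕ → V} (hR₁ : IsRay G R₁) (hS₁ : IsRay G S₁)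
    (hS₂ : IsRay G S₂) (hd : Disjoint (range R₁) (range S₁))
    (h₁ : (range R₁ ∩ range S₂).Nonempty) (h₂ : (range S₁ ∩ range S₂).Nonempty) :
    ∃ f, IsDoubleRay G f ∧ drEdges f ⊆ rayEdges R₁ ∪ rayEdges S₁ ∪ rayEdges S₂ := by
  obtain ⟨_, ⟨a, rfl⟩, i, hi⟩ := h₁
  obtain ⟨_, ⟨b, rfl⟩, j, hj⟩ := h₂
  wlog hij : i ≤ j generalizing R₁ S₁ i j a b
  · obtain ⟨f, hf, hfE⟩ := this hS₁ hR₁ hd.symm b j hj a i hi (by omega)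
    exact ⟨f, hf, hfE.trans (by rw [union_comm (rayEdges S₁)])⟩
  obtain ⟨m, L, -, hp⟩ := ((hS₂.tail i).isFinPath (j - i)).exists_isXYPath hd (by simp [hi])
    (by simp [Nat.add_sub_cancel' hij, hj])
  obtain ⟨a', ha'⟩ := hp.start_mem
  obtain ⟨b', hb'⟩ := hp.end_mem
  obtain ⟨f, hf, hfE⟩ := hp.exists_isDoubleRay hd (hR₁.tail a') (range_comp_subset_range _ _)
    (by simpa using ha') (hS₁.tail b') (range_comp_subset_range _ _) (by simpa using hb')
  refine ⟨f, hf, hfE.trans (union_subset_union (union_subset_union (rayEdges_tail_subset _ _)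
    (rayEdges_tail_subset _ _)) ((segEdges_subset_rayEdges _ _ _).trans ?_))⟩
  exact (rayEdges_tail_subset (fun n => S₂ (i + n)) m).trans (rayEdges_tail_subset _ i)

lemma Is2Ray.swap {p : (ℕ → V) × (ℕ → V)} (hp : Is2Ray G p) : Is2Ray G p.swap :=
  ⟨hp.2.1, hp.1, hp.2.2.symm⟩

lemma twoRayEdges_swap (p : (ℕ → V) × (ℕ → V)) : twoRayEdges p.swap = twoRayEdges p :=
  union_comm _ _

lemma Is2Ray.exists_isDoubleRay_of_meets {p q : (ℕ → V) × (ℕ → V)} (hp : Is2Ray G p)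
    (hq : IsRay G q.2) (h₁ : (range p.1 ∩ range q.2).Nonempty)
    (h₂ : (range p.2 ∩ range q.2).Nonempty) :
    ∃ f, IsDoubleRay G f ∧ drEdges f ⊆ twoRayEdges p ∪ twoRayEdges q := by
  obtain ⟨f, hf, hfE⟩ := _root_.exists_isDoubleRay_of_meets hp.1 hp.2.1 hq hp.2.2 h₁ h₂
  exact ⟨f, hf, hfE.trans (union_subset_union_right _ subset_union_right)⟩

lemma exists_doubleRays_of_pairs {E : ℕ → Set (Sym2 V)} (hE : Pairwise (Disjoint on E))
    (h : ∀ t, ∃ f, IsDoubleRay G f ∧ drEdges f ⊆ E (2 * t) ∪ E (2 * t + 1)) :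
    ∃ D : ℕ → ℤ → V, (∀ t, IsDoubleRay G (D t)) ∧
      Pairwise fun s t => Disjoint (drEdges (D s)) (drEdges (D t)) := by
  choose D hD hDE using h
  refine ⟨D, hD, fun s t hst => Disjoint.mono (hDE s) (hDE t) ?_⟩
  simp only [disjoint_union_left, disjoint_union_right]
  exact ⟨⟨hE (by omega), hE (by omega)⟩, hE (by omega), hE (by omega)⟩

lemma exists_doubleRays_of_disjoint {W : ℕ → V} (hW : IsRay G W)
    (hone : ∀ f : ℕ → V, IsRay G f → RayEquiv G W f) {R S : ℕ → ℕ → V}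
    (hR : ∀ i, IsRay G (R i)) (hS : ∀ i, IsRay G (S i))
    (hRS : ∀ i j, Disjoint (range (R i)) (range (S j)))
    (hRR : Pairwise fun i j => (range (R i) ∩ range (R j)).Infinite)
    (hSS : Pairwise fun i j => (range (S i) ∩ range (S j)).Infinite)
    (hRE : Pairwise (Disjoint on fun i => rayEdges (R i)))
    (hSE : Pairwise (Disjoint on fun i => rayEdges (S i))) :
    ∃ D : ℕ → ℤ → V, (∀ t, IsDoubleRay G (D t)) ∧
      Pairwise fun s t => Disjoint (drEdges (D s)) (drEdges (D t)) := by
  set X := ⋃ i, range (R i)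
  set Y := ⋃ j, range (S j)
  have hXY : Disjoint X Y := disjoint_iUnion_left.2 fun i => disjoint_iUnion_right.2 (hRS i)
  obtain ⟨ℓ, q, hq, hqd⟩ := exists_pairwise_disjoint_isXYPath hW hone (hR 0) (hS 0) hXY
    (subset_iUnion (fun i => range (R i)) 0) (subset_iUnion (fun i => range (S i)) 0)
  obtain ⟨φ, hφ, A, hA, hAE⟩ := exists_edgeDisjoint_rays_from hR hRR hRE
    (hqd.injective_of_mem fun t => mem_image_of_mem (q t) (mem_Iic.2 (Nat.zero_le _)))
    fun t => (hq t).start_mem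
  obtain ⟨ψ, hψ, B, hB, hBE⟩ := exists_edgeDisjoint_rays_from hS hSS hSE
    ((hqd.comp_of_injective hφ).injective_of_mem fun t =>
      mem_image_of_mem (q (φ t)) (mem_Iic.2 le_rfl))
    fun t => (hq (φ t)).end_mem
  choose D hD hDE using fun t => (hq (φ (ψ t))).exists_isDoubleRay hXY (hA (ψ t)).1
    (hA (ψ t)).2.2 (hA (ψ t)).2.1 (hB t).1 (hB t).2.2 (hB t).2.1
  refine ⟨D, hD, (Pairwise.disjoint_union₃ (hAE.comp_of_injective hψ) hBE ?_ ?_ ?_ ?_).mono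
    fun s t h => h.mono (hDE s) (hDE t)⟩
  · exact fun s t hst => (hqd ((hφ.comp hψ).ne hst)).sym2.mono (segEdges_subset_sym2 _ _)
      (segEdges_subset_sym2 _ _)
  · exact fun s t => hXY.sym2.mono (rayEdges_subset_sym2 (hA _).2.2)
      (rayEdges_subset_sym2 (hB _).2.2)
  · exact fun s t => ((hq _).disjoint_sym2_left.mono_right
      (rayEdges_subset_sym2 (hA _).2.2)).symm
  · exact fun s t => ((hq _).disjoint_sym2_right.mono_right
      (rayEdges_subset_sym2 (hB _).2.2)).symm

end DoubleRays

theorem stmt_13_general (G : SimpleGraph V)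
    (W : ℕ → V) (k : ℕ) (hW : IsRay G W) (hdeg : EndVertexDegree G W k)
    (hone : ∀ f : ℕ → V, IsRay G f → RayEquiv G W f)
    (h : ∃ F : ℕ → (ℕ → V) × (ℕ → V), (∀ i, Is2Ray G (F i)) ∧
      Pairwise fun i j => Disjoint (twoRayEdges (F i)) (twoRayEdges (F j))) :
    ∃ F : ℕ → ℤ → V, (∀ i, IsDoubleRay G (F i)) ∧
      Pairwise fun i j => Disjoint (drEdges (F i)) (drEdges (F j)) := by
  obtain ⟨F, hF, hFE⟩ := h
  obtain ⟨g, hg, ⟨dRS, dSR, dRR, dSS⟩, hd⟩ := exists_strictMono_monochromatic fun i j =>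
    (Disjoint (range (F i).1) (range (F j).2), Disjoint (range (F i).2) (range (F j).1),
      (range (F i).1 ∩ range (F j).1).Infinite, (range (F i).2 ∩ range (F j).2).Infinite)
  simp only [Prod.mk.injEq] at hd
  have hE : Pairwise (Disjoint on fun i => twoRayEdges (F (g i))) :=
    hFE.comp_of_injective hg.injective
  have hRR := pairwise_infinite_inter_of_homogeneous hdeg hone (fun i => (hF (g i)).1)
    fun i j hij => (hd i j hij).2.2.1
  have hSS := pairwise_infinite_inter_of_homogeneous hdeg hone (fun i => (hF (g i)).2.1)
    fun i j hij => (hd i j hij).2.2.2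
  have hpair (t : ℕ) : 2 * t < 2 * t + 1 := Nat.lt_succ_self _
  by_cases hRS : dRS; swap
  · exact exists_doubleRays_of_pairs hE fun t =>
      (hF (g (2 * t))).exists_isDoubleRay_of_meets (hF _).2.1
        (not_disjoint_iff_nonempty_inter.1 ((hd _ _ (hpair t)).1.to_iff.not.2 hRS))
        (hSS (hpair t).ne).nonempty
  by_cases hSR : dSR; swap
  · refine exists_doubleRays_of_pairs hE fun t => ?_
    simpa only [twoRayEdges_swap] using (hF (g (2 * t))).swap.exists_isDoubleRay_of_meets
      (q := (F (g (2 * t + 1))).swap) (hF _).1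
      (not_disjoint_iff_nonempty_inter.1 ((hd _ _ (hpair t)).2.1.to_iff.not.2 hSR))
      (hRR (hpair t).ne).nonempty
  refine exists_doubleRays_of_disjoint hW hone (fun i => (hF (g i)).1) (fun i => (hF (g i)).2.1)
    (fun i j => ?_) hRR hSS (hE.mono fun i j h => h.mono subset_union_left subset_union_left)
    (hE.mono fun i j h => h.mono subset_union_right subset_union_right)
  rcases lt_trichotomy i j with hij | rfl | hij
  · exact (hd i j hij).1.to_iff.2 hRS
  · exact (hF (g i)).2.2
  · exact ((hd j i hij).2.1.to_iff.2 hSR).symm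

/-- A locally finite graph with exactly one end, which is thin, containing
infinitely many pairwise edge-disjoint `2`-rays contains infinitely many pairwise
edge-disjoint double rays. -/
theorem stmt_13 (G : SimpleGraph V)
    (hlf : ∀ v : V, (G.neighborSet v).Finite)
    (W : ℕ → V) (k : ℕ) (hW : IsRay G W) (hdeg : EndVertexDegree G W k)
    (hone : ∀ f : ℕ → V, IsRay G f → RayEquiv G W f)
    (h : ∃ F : ℕ → (ℕ → V) × (ℕ → V), (∀ i, Is2Ray G (F i)) ∧
      Pairwise fun i j => Disjoint (twoRayEdges (F i)) (twoRayEdges (F j))) :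
    ∃ F : ℕ → ℤ → V, (∀ i, IsDoubleRay G (F i)) ∧
      Pairwise fun i j => Disjoint (drEdges (F i)) (drEdges (F j)) :=
  stmt_13_general G W k hW hdeg hone h
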